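/- arXiv:2004.05896 — 4 statements merged into one kernel-verified Lean document; each statement's English description precedes it below -/
import Mathlib

section
/- Let C be an F_q-linear code of length n, where q = r^h. Then the dual of the subfield subcode C ∩ F_r^n (as an F_r-linear code) equals the trace code Tr(C^⊥), where Tr: F_q → F_r is the field trace extended componentwise. (Delsarte's theorem) -/
/-! Since `v ⬝ᵥ Tr c = Tr (v ⬝ᵥ c)` for `v` over `F_r`, and an `F_q`-linear code `D` is closed under
`F_q`-scaling, `v` is orthogonal to the trace code `Tr D` iff `Tr (a * (v ⬝ᵥ c)) = 0` for all
`a : F_q` and `c ∈ D`; by nondegeneracy of the trace form of the separable extension `F_q / F_r`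
this says `v ∈ D^⊥`. Hence `(Tr D)^⊥ = D^⊥ ∩ F_r^n`; apply this to `D = C^⊥` and dualise once
more over `F_r`, using that both duals are involutive in finite dimension. -/

open LinearMap (BilinForm)

section DotProduct

variable (R ι : Type*) [CommSemiring R] [Fintype ι]

abbrev dotProductForm : BilinForm R (ι → R) := dotProductBilin R R

variable {R ι}

lemma dotProductForm_isSymm : LinearMap.IsSymm (dotProductForm R ι) :=
  ⟨fun x y => dotProduct_comm x y⟩

lemma dotProductForm_nondegenerate {R : Type*} [CommRing R] :
    (dotProductForm R ι).Nondegenerate := by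
  classical
  refine (LinearMap.IsRefl.nondegenerate_iff_separatingLeft
    (B := dotProductForm R ι) (dotProductForm_isSymm (R := R) (ι := ι)).isRefl).mpr fun x hx => ?_
  ext i
  simpa using hx (Pi.single i 1)

lemma mem_orthogonal_dotProductForm {W : Submodule R (ι → R)} {x : ι → R} :
    x ∈ (dotProductForm R ι).orthogonal W ↔ ∀ w ∈ W, x ⬝ᵥ w = 0 := by
  simp [LinearMap.BilinForm.mem_orthogonal_iff, dotProduct_comm]

lemma orthogonal_orthogonal_dotProductForm {K : Type*} [Field K] (W : Submodule K (ι → K)) :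
    (dotProductForm K ι).orthogonal ((dotProductForm K ι).orthogonal W) = W :=
  LinearMap.BilinForm.orthogonal_orthogonal dotProductForm_nondegenerate
    (dotProductForm_isSymm (R := K) (ι := ι)).isRefl W

end DotProduct

section SubfieldSubcode

variable (K L ι : Type*) [Field K] [Field L] [Algebra K L]

def subfieldSubcode (C : Submodule L (ι → L)) : Submodule K (ι → K) :=
  (C.restrictScalars K).comap ((Algebra.linearMap K L).compLeft ι)

noncomputable def traceCode (C : Submodule L (ι → L)) : Submodule K (ι → K) :=
  (C.restrictScalars K).map ((Algebra.trace K L).compLeft ι)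

variable {K L ι}

lemma mem_subfieldSubcode {C : Submodule L (ι → L)} {v : ι → K} :
    v ∈ subfieldSubcode K L ι C ↔ (fun i => algebraMap K L (v i)) ∈ C :=
  Iff.rfl

lemma mem_traceCode {C : Submodule L (ι → L)} {v : ι → K} :
    v ∈ traceCode K L ι C ↔ ∃ c ∈ C, ∀ i, Algebra.trace K L (c i) = v i := by
  simp [traceCode, funext_iff]

variable [Fintype ι]

lemma dotProduct_trace (v : ι → K) (c : ι → L) :
    v ⬝ᵥ (Algebra.trace K L).compLeft ι c =
      Algebra.trace K L ((fun i => algebraMap K L (v i)) ⬝ᵥ c) := by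
  simp only [dotProduct, map_sum, LinearMap.compLeft_apply, Function.comp_apply]
  refine Finset.sum_congr rfl fun i _ => ?_
  rw [← smul_eq_mul, ← map_smul, Algebra.smul_def]

lemma orthogonal_traceCode [FiniteDimensional K L] [Algebra.IsSeparable K L]
    (D : Submodule L (ι → L)) :
    (dotProductForm K ι).orthogonal (traceCode K L ι D) =
      subfieldSubcode K L ι ((dotProductForm L ι).orthogonal D) := by
  ext v
  simp only [mem_orthogonal_dotProductForm, mem_subfieldSubcode, traceCode, Submodule.mem_map,
    Submodule.restrictScalars_mem, forall_exists_index, and_imp, forall_apply_eq_imp_iff₂,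
    dotProduct_trace]
  refine ⟨fun hv c hc => (traceForm_nondegenerate K L).1 _ fun a => ?_,
    fun hv c hc => by rw [hv c hc, map_zero]⟩
  rw [Algebra.traceForm_apply, mul_comm, ← smul_eq_mul, ← dotProduct_smul]
  exact hv _ (D.smul_mem a hc)

theorem orthogonal_subfieldSubcode [FiniteDimensional K L] [Algebra.IsSeparable K L] (C : Submodule L (ι → L)) :
    (dotProductForm K ι).orthogonal (subfieldSubcode K L ι C) =
      traceCode K L ι ((dotProductForm L ι).orthogonal C) := by
  rw [← orthogonal_orthogonal_dotProductForm (traceCode K L ι _), orthogonal_traceCode,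
    orthogonal_orthogonal_dotProductForm C]

end SubfieldSubcode

theorem delsarte_dual_subfield_subcode_eq_trace_dual_general
    (n : ℕ)
    (Fr Fq : Type) [Field Fr] [Field Fq] [Fintype Fq] [Algebra Fr Fq]
    (C : Submodule Fq (Fin n → Fq)) :
    {x : Fin n → Fr | ∀ v : Fin n → Fr,
        ((fun i => algebraMap Fr Fq (v i)) ∈ C) → ∑ i, x i * v i = 0}
      = {v : Fin n → Fr | ∃ c : Fin n → Fq,
          (∀ u ∈ C, ∑ i, c i * u i = 0) ∧ ∀ i, v i = Algebra.trace Fr Fq (c i)} := by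
  have : Finite Fr := .of_injective _ (algebraMap Fr Fq).injective
  ext x
  simpa only [Set.mem_ofPred_eq, mem_orthogonal_dotProductForm, mem_subfieldSubcode,
    mem_traceCode, dotProduct, eq_comm] using
    SetLike.ext_iff.mp (orthogonal_subfieldSubcode (K := Fr) C) x

/-- Delsarte's theorem: the dual of the subfield subcode `C ∩ F_r^n` equals the
trace code of the dual code `C^⊥`. -/
theorem delsarte_dual_subfield_subcode_eq_trace_dual
    (r h n : ℕ) (hh : 1 ≤ h) (hpp : ∃ p k : ℕ, p.Prime ∧ 0 < k ∧ r = p ^ k)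
    (Fr Fq : Type) [Field Fr] [Field Fq] [Fintype Fr] [Fintype Fq] [Algebra Fr Fq]
    (hcr : Fintype.card Fr = r) (hcq : Fintype.card Fq = r ^ h)
    (C : Submodule Fq (Fin n → Fq)) :
    {x : Fin n → Fr | ∀ v : Fin n → Fr,
        ((fun i => algebraMap Fr Fq (v i)) ∈ C) → ∑ i, x i * v i = 0}
      = {v : Fin n → Fr | ∃ c : Fin n → Fq,
          (∀ u ∈ C, ∑ i, c i * u i = 0) ∧ ∀ i, v i = Algebra.trace Fr Fq (c i)} :=
  delsarte_dual_subfield_subcode_eq_trace_dual_general n Fr Fq C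
end

section
/- The Hermitian curve Y^q Z + Y Z^q = X^{q+1} in the projective plane PG(2, q^2) has exactly q^3 + 1 points rational over F_{q^2}: the point (0:1:0) and q^3 affine points. -/
/-!
A point of the curve with `Z = 0` has `X = 0`, so it is `(0 : 1 : 0)`; every other point is
`(x : y : 1)` with `T y = N x`, where `T y = y ^ q + y` and `N x = x ^ (q + 1)`. Since
`x ↦ x ^ q` is an involutive field automorphism of `F`, both `T` and `N` take values in its fixed
set `K`. Now `K` has at most `q` elements and every fibre of `T` has at most `q` elements (roots of
polynomials of degree `q`), while the fibres of `T` over `K` partition the `q ^ 2` elements of `F`.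
Hence every fibre over `K` has exactly `q` elements, and each `x` gives `q` affine points.
-/

open scoped LinearAlgebra.Projectivization
open Finset Polynomial

theorem Finset.eq_of_sum_eq_mul_self {ι : Type*} {s : Finset ι} {f : ι → ℕ} {m : ℕ}
    (hf : ∀ i ∈ s, f i ≤ m) (hs : #s ≤ m) (hsum : ∑ i ∈ s, f i = m * m) {i : ι} (hi : i ∈ s) :
    f i = m := by
  have hle : ∑ i ∈ s, f i ≤ ∑ _i ∈ s, m := sum_le_sum hf
  have heq : ∑ i ∈ s, f i = ∑ _i ∈ s, m := by
    rw [sum_const, smul_eq_mul] at hle ⊢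
    exact le_antisymm hle (hsum ▸ Nat.mul_le_mul_right m hs)
  exact (sum_eq_sum_iff_of_le hf).1 heq i hi

theorem Polynomial.card_filter_isRoot_le {R : Type*} [CommRing R] [IsDomain R] [Fintype R]
    [DecidableEq R] {f : R[X]} (hf : f ≠ 0) : #{x | f.IsRoot x} ≤ f.natDegree :=
  card_le_degree_of_subset_roots fun x hx => by
    simpa [mem_roots hf] using (mem_filter.1 hx).2

section RootBounds

variable {F : Type*} [Field F] [Fintype F] [DecidableEq F] {q : ℕ}

theorem card_filter_pow_add_self_eq_le (hq : 2 ≤ q) (c : F) : #{y : F | y ^ q + y = c} ≤ q := by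
  have hdeg : (X ^ q + (X - C c)).natDegree = q := by
    rw [natDegree_add_eq_left_of_natDegree_lt] <;> simp; omega
  have h := card_filter_isRoot_le (ne_zero_of_natDegree_gt (hdeg ▸ (by omega : 0 < q)))
  rw [hdeg] at h
  convert h using 3
  simp [add_sub_assoc', sub_eq_zero]

theorem card_filter_pow_eq_self_le (hq : 2 ≤ q) : #{c : F | c ^ q = c} ≤ q := by
  have hdeg := FiniteField.X_pow_card_sub_X_natDegree_eq F (by omega : 1 < q)
  have h := card_filter_isRoot_le (ne_zero_of_natDegree_gt (hdeg ▸ (by omega : 0 < q)))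
  rw [hdeg] at h
  simpa [sub_eq_zero] using h

end RootBounds

section CardEqSq

variable {F : Type*} [Field F] [Fintype F] {q : ℕ}

theorem two_le_of_card_eq_sq (hcard : Fintype.card F = q ^ 2) : 2 ≤ q := by
  have h := Fintype.one_lt_card (α := F)
  rw [hcard] at h
  by_contra! hq
  interval_cases q <;> simp at h

theorem add_pow_of_card_eq_sq (hcard : Fintype.card F = q ^ 2) (a b : F) :
    (a + b) ^ q = a ^ q + b ^ q := by
  obtain ⟨p, _, n, hp, hpn⟩ := FiniteField.card' F
  -- `q ∣ q ^ 2 = p ^ n`, so `q` is a power of the characteristic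
  obtain ⟨k, -, rfl⟩ := (Nat.dvd_prime_pow hp).1 (hpn ▸ hcard ▸ dvd_pow_self q two_ne_zero)
  have := Fact.mk hp
  exact add_pow_char_pow ..

theorem pow_pow_of_card_eq_sq (hcard : Fintype.card F = q ^ 2) (a : F) : (a ^ q) ^ q = a := by
  rw [← pow_mul, ← sq, ← hcard, FiniteField.pow_card]

theorem pow_add_self_pow_of_card_eq_sq (hcard : Fintype.card F = q ^ 2) (y : F) :
    (y ^ q + y) ^ q = y ^ q + y := by
  rw [add_pow_of_card_eq_sq hcard, pow_pow_of_card_eq_sq hcard, add_comm]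

theorem pow_succ_pow_of_card_eq_sq (hcard : Fintype.card F = q ^ 2) (x : F) :
    (x ^ (q + 1)) ^ q = x ^ (q + 1) := by
  rw [pow_succ, mul_pow, pow_pow_of_card_eq_sq hcard, mul_comm]

variable [DecidableEq F]

theorem card_filter_pow_add_self_eq_of_card_eq_sq (hcard : Fintype.card F = q ^ 2) {c : F}
    (hc : c ^ q = c) : #{y : F | y ^ q + y = c} = q := by
  have hq := two_le_of_card_eq_sq hcard
  have hsum : ∑ c ∈ ({c : F | c ^ q = c} : Finset F), #{y : F | y ^ q + y = c} = q * q := by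
    rw [← card_eq_sum_card_fiberwise fun y _ => by
        simpa using pow_add_self_pow_of_card_eq_sq hcard y,
      card_univ, hcard, sq]
  exact eq_of_sum_eq_mul_self (fun c _ => card_filter_pow_add_self_eq_le hq c)
    (card_filter_pow_eq_self_le hq) hsum (by simpa using hc)

theorem card_hermitian_affine (hcard : Fintype.card F = q ^ 2) :
    #{w : F × F | w.2 ^ q + w.2 = w.1 ^ (q + 1)} = q ^ 3 := by
  calc #{w : F × F | w.2 ^ q + w.2 = w.1 ^ (q + 1)}
      = ∑ x : F, #{y : F | y ^ q + y = x ^ (q + 1)} := by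
        simp only [card_filter, Fintype.sum_prod_type]
    _ = ∑ _x : F, q := by
        congr! 1 with x
        exact card_filter_pow_add_self_eq_of_card_eq_sq hcard (pow_succ_pow_of_card_eq_sq hcard x)
    _ = q ^ 3 := by simp [hcard]; ring

end CardEqSq

namespace Projectivization

variable {F : Type*} [Field F]

def affinePoint (w : F × F) : ℙ F (Fin 3 → F) :=
  mk F ![w.1, w.2, 1] fun h => by simpa using congrFun h 2

def pointAtInfinity : ℙ F (Fin 3 → F) :=
  mk F ![0, 1, 0] fun h => by simpa using congrFun h 1

theorem affinePoint_injective : Function.Injective (affinePoint (F := F)) := by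
  intro w w' h
  obtain ⟨a, ha⟩ := (mk_eq_mk_iff ..).1 h
  have h0 := congrFun ha 0
  have h1 := congrFun ha 1
  have h2 := congrFun ha 2
  simp only [Units.smul_def, Pi.smul_apply, smul_eq_mul, Matrix.cons_val, mul_one] at h0 h1 h2
  rw [h2, one_mul] at h0 h1
  exact Prod.ext h0.symm h1.symm

theorem pointAtInfinity_ne_affinePoint (w : F × F) : pointAtInfinity ≠ affinePoint w := by
  intro h
  obtain ⟨a, ha⟩ := (mk_eq_mk_iff ..).1 h
  simpa [Units.smul_def] using congrFun ha 2

theorem eq_affinePoint_of_rep_two_ne_zero {P : ℙ F (Fin 3 → F)} (h : P.rep 2 ≠ 0) :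
    P = affinePoint (P.rep 0 / P.rep 2, P.rep 1 / P.rep 2) := by
  conv_lhs => rw [← P.mk_rep]
  refine (mk_eq_mk_iff ..).2 ⟨Units.mk0 (P.rep 2) h, ?_⟩
  ext i
  fin_cases i <;> simp [Units.smul_def, mul_div_cancel₀ _ h]

theorem eq_pointAtInfinity_of_rep_zero_eq_zero_of_rep_two_eq_zero {P : ℙ F (Fin 3 → F)}
    (h0 : P.rep 0 = 0) (h2 : P.rep 2 = 0) : P = pointAtInfinity := by
  have h1 : P.rep 1 ≠ 0 := fun h1 => P.rep_nonzero (by ext i; fin_cases i <;> assumption)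
  conv_lhs => rw [← P.mk_rep]
  refine (mk_eq_mk_iff ..).2 ⟨Units.mk0 (P.rep 1) h1, ?_⟩
  ext i
  fin_cases i <;> simp [Units.smul_def, h0, h2]

end Projectivization

open Projectivization

def IsOnHermitianCurve {F : Type*} [Field F] (q : ℕ) (v : Fin 3 → F) : Prop :=
  v 1 ^ q * v 2 + v 1 * v 2 ^ q = v 0 ^ (q + 1)

section HermitianCurve

variable {F : Type*} [Field F] {q : ℕ}

theorem isOnHermitianCurve_smul_iff (a : Fˣ) (v : Fin 3 → F) :
    IsOnHermitianCurve q (a • v) ↔ IsOnHermitianCurve q v := by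
  simp only [IsOnHermitianCurve, Units.smul_def, Pi.smul_apply, smul_eq_mul]
  rw [show (a * v 1) ^ q * (a * v 2) + a * v 1 * (a * v 2) ^ q
      = (a : F) ^ (q + 1) * (v 1 ^ q * v 2 + v 1 * v 2 ^ q) by ring,
    mul_pow, mul_right_inj' (pow_ne_zero _ a.ne_zero)]

theorem isOnHermitianCurve_rep_mk_iff (v : Fin 3 → F) (hv : v ≠ 0) :
    IsOnHermitianCurve q (mk F v hv).rep ↔ IsOnHermitianCurve q v := by
  obtain ⟨a, ha⟩ := exists_smul_eq_mk_rep F v hv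
  rw [← ha, isOnHermitianCurve_smul_iff]

theorem isOnHermitianCurve_affinePoint_iff (w : F × F) :
    IsOnHermitianCurve q (affinePoint w).rep ↔ w.2 ^ q + w.2 = w.1 ^ (q + 1) := by
  rw [affinePoint, isOnHermitianCurve_rep_mk_iff]
  simp [IsOnHermitianCurve]

theorem isOnHermitianCurve_pointAtInfinity (hq : q ≠ 0) :
    IsOnHermitianCurve q (pointAtInfinity (F := F)).rep := by
  rw [pointAtInfinity, isOnHermitianCurve_rep_mk_iff]
  simp [IsOnHermitianCurve, hq]

theorem setOf_isOnHermitianCurve_eq (hq : q ≠ 0) :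
    {P : ℙ F (Fin 3 → F) | IsOnHermitianCurve q P.rep}
      = insert pointAtInfinity (affinePoint '' {w | w.2 ^ q + w.2 = w.1 ^ (q + 1)}) := by
  ext P
  simp only [Set.mem_ofPred_eq, Set.mem_insert_iff, Set.mem_image]
  constructor
  · intro hP
    by_cases h2 : P.rep 2 = 0
    · left
      refine eq_pointAtInfinity_of_rep_zero_eq_zero_of_rep_two_eq_zero ?_ h2
      have : P.rep 0 ^ (q + 1) = 0 := by simpa [IsOnHermitianCurve, h2, hq] using hP.symm
      exact (pow_eq_zero_iff q.succ_ne_zero).1 this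
    · right
      rw [eq_affinePoint_of_rep_two_ne_zero h2, isOnHermitianCurve_affinePoint_iff] at hP
      exact ⟨_, hP, (eq_affinePoint_of_rep_two_ne_zero h2).symm⟩
  · rintro (rfl | ⟨w, hw, rfl⟩)
    · exact isOnHermitianCurve_pointAtInfinity hq
    · exact (isOnHermitianCurve_affinePoint_iff w).2 hw

end HermitianCurve

theorem hermitian_curve_point_count_general
    (q : ℕ)
    (F : Type) [Field F] [Fintype F] (hcard : Fintype.card F = q ^ 2) :
    Set.ncard {P : ℙ F (Fin 3 → F) |
        (P.rep 1) ^ q * P.rep 2 + P.rep 1 * (P.rep 2) ^ q = (P.rep 0) ^ (q + 1)}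
      = q ^ 3 + 1 := by
  classical
  have hq : q ≠ 0 := by have := two_le_of_card_eq_sq hcard; omega
  change Set.ncard {P : ℙ F (Fin 3 → F) | IsOnHermitianCurve q P.rep} = _
  rw [setOf_isOnHermitianCurve_eq hq,
    Set.ncard_insert_of_notMem
      (by rintro ⟨w, -, hw⟩; exact pointAtInfinity_ne_affinePoint w hw.symm)
      ((Set.toFinite _).image _),
    Set.ncard_image_of_injective _ affinePoint_injective, ← card_hermitian_affine hcard,
    Set.ncard_eq_toFinset_card', Set.toFinset_ofPred]

/-- The Hermitian curve `Y^q Z + Y Z^q = X^{q+1}` in `PG(2, q^2)` has exactly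
`q^3 + 1` points rational over `F_{q^2}`. -/
theorem hermitian_curve_point_count
    (q : ℕ) (hq : ∃ p m : ℕ, p.Prime ∧ 0 < m ∧ q = p ^ m)
    (F : Type) [Field F] [Fintype F] (hcard : Fintype.card F = q ^ 2) :
    Set.ncard {P : ℙ F (Fin 3 → F) |
        (P.rep 1) ^ q * P.rep 2 + P.rep 1 * (P.rep 2) ^ q = (P.rep 0) ^ (q + 1)}
      = q ^ 3 + 1 :=
  hermitian_curve_point_count_general q F hcard
end

section
/- The set M(s) = { x^i y^j : 0 ≤ i ≤ q^2 - 1, 0 ≤ j ≤ q - 1, qi + (q+1)j ≤ s } of monomials is linearly independent over F_{q^2} when viewed as functions on the affine Hermitian curve, i.e., the evaluation vectors (f(P_1),...,f(P_{q^3})) at the q^3 affine F_{q^2}-rational points of y^q + y = x^{q+1} are linearly independent, provided s < q^3. -/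
open Polynomial Finset

private lemma card_filter_eval_le {F : Type} [Field F] [Fintype F] [DecidableEq F]
    (P : F[X]) (hP : P ≠ 0) :
    (Finset.univ.filter (fun y : F => P.eval y = 0)).card ≤ P.natDegree := by
  classical
  calc (Finset.univ.filter fun y : F => P.eval y = 0).card
      ≤ P.roots.toFinset.card := Finset.card_le_card (by
        intro y hy
        simp only [Finset.mem_filter, Finset.mem_univ, true_and] at hy
        simp [Multiset.mem_toFinset, mem_roots hP, IsRoot.def, hy])
    _ ≤ Multiset.card P.roots := Multiset.toFinset_card_le _
    _ ≤ P.natDegree := P.card_roots'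

private lemma fiber_card {F : Type} [Field F] [Fintype F] [DecidableEq F]
    (q : ℕ) (hq2 : 2 ≤ q)
    (hfrob : ∀ x y : F, (x + y) ^ q = x ^ q + y ^ q)
    (hcard : Fintype.card F = q ^ 2) (a : F) :
    q ≤ (Finset.univ.filter (fun y : F => y ^ q + y = a ^ (q + 1))).card := by
  classical
  set f : F → F := fun y => y ^ q + y with hf
  set I : Finset F := Finset.univ.image f with hI
  set R : Finset F := Finset.univ.filter (fun z : F => z ^ q = z) with hR
  have hq0 : 0 < q := by omega
  have hpow2 : ∀ y : F, y ^ (q ^ 2) = y := by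
    intro y; rw [← hcard]; exact FiniteField.pow_card y
  -- each fiber has card ≤ q
  have hfib_le : ∀ c : F, (Finset.univ.filter (fun y : F => f y = c)).card ≤ q := by
    intro c
    set P : F[X] := X ^ q + X - C c with hP
    have hcoeff : P.coeff q = 1 := by
      simp only [hP, coeff_sub, coeff_add, coeff_X_pow, coeff_X, coeff_C, if_pos rfl,
        if_neg (by omega : ¬ (1:ℕ) = q), if_neg (by omega : ¬ q = 0)]
      simp
    have hP0 : P ≠ 0 := fun h => by simp [h] at hcoeff
    have hdeg : P.natDegree ≤ q := by
      have h1 : (X ^ q + X : F[X]).natDegree ≤ q := by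
        refine (natDegree_add_le _ _).trans ?_
        simp [natDegree_X_pow]; omega
      calc P.natDegree ≤ max (X ^ q + X : F[X]).natDegree (C c).natDegree :=
            natDegree_sub_le _ _
        _ ≤ q := by simp [h1]
    refine le_trans (le_of_eq ?_) ((card_filter_eval_le P hP0).trans hdeg)
    congr 1
    ext y
    simp [hP, hf, sub_eq_zero]
  -- card R ≤ q
  have hRcard : R.card ≤ q := by
    set P : F[X] := X ^ q - X with hP
    have hcoeff : P.coeff q = 1 := by
      simp only [hP, coeff_sub, coeff_X_pow, coeff_X, if_pos rfl,
        if_neg (by omega : ¬ (1:ℕ) = q)]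
      simp
    have hP0 : P ≠ 0 := fun h => by simp [h] at hcoeff
    have hdeg : P.natDegree ≤ q := by
      refine (natDegree_sub_le _ _).trans ?_
      simp [natDegree_X_pow]; omega
    refine le_trans (le_of_eq ?_) ((card_filter_eval_le P hP0).trans hdeg)
    congr 1
    ext y
    simp [hP, hR, sub_eq_zero]
  -- I ⊆ R
  have hIR : I ⊆ R := by
    intro z hz
    simp only [hI, Finset.mem_image, Finset.mem_univ, true_and] at hz
    obtain ⟨y, rfl⟩ := hz
    simp only [hR, Finset.mem_filter, Finset.mem_univ, true_and]
    rw [hf]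
    simp only
    rw [hfrob, ← pow_mul, ← pow_two, hpow2, add_comm]
  have hIcard_le : I.card ≤ q := (Finset.card_le_card hIR).trans hRcard
  -- fiberwise count
  have h1 : ∑ c ∈ I, (Finset.univ.filter (fun y : F => f y = c)).card = q ^ 2 := by
    rw [← hcard]
    exact (Finset.card_eq_sum_card_fiberwise
      (fun x _ => Finset.mem_image_of_mem f (Finset.mem_univ x))).symm
  have hIcard : I.card = q := by
    have h2 : q ^ 2 ≤ I.card * q := by
      rw [← h1]
      calc ∑ c ∈ I, (Finset.univ.filter (fun y : F => f y = c)).card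
          ≤ ∑ _c ∈ I, q := Finset.sum_le_sum fun c _ => hfib_le c
        _ = I.card * q := by simp [Finset.sum_const]
    rw [pow_two] at h2
    have := Nat.le_of_mul_le_mul_right h2 hq0
    omega
  have hIeqR : I = R := Finset.eq_of_subset_of_card_le hIR (by omega)
  -- a^(q+1) ∈ R
  have haR : a ^ (q + 1) ∈ R := by
    simp only [hR, Finset.mem_filter, Finset.mem_univ, true_and]
    calc (a ^ (q + 1)) ^ q = a ^ (q ^ 2) * a ^ q := by
          rw [← pow_mul, ← pow_add]; congr 1; ring
      _ = a * a ^ q := by rw [hpow2]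
      _ = a ^ (q + 1) := by rw [pow_succ, mul_comm]
  have haI : a ^ (q + 1) ∈ I := hIeqR ▸ haR
  -- all fibers over I have card exactly q
  by_contra hlt
  push_neg at hlt
  have hlt' : (Finset.univ.filter (fun y : F => f y = a ^ (q + 1))).card < q := hlt
  have hstrict : ∑ c ∈ I, (Finset.univ.filter (fun y : F => f y = c)).card < ∑ _c ∈ I, q :=
    Finset.sum_lt_sum (fun c _ => hfib_le c) ⟨a ^ (q + 1), haI, hlt'⟩
  rw [h1, Finset.sum_const, smul_eq_mul, hIcard, ← pow_two] at hstrict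
  exact lt_irrefl _ hstrict

private lemma coeffs_zero {F : Type} [Field F] [Fintype F] [DecidableEq F]
    (q : ℕ) (hq2 : 2 ≤ q)
    (hfrob : ∀ x y : F, (x + y) ^ q = x ^ q + y ^ q)
    (hcard : Fintype.card F = q ^ 2) (c : ℕ → ℕ → F)
    (hvanish : ∀ x y : F, y ^ q + y = x ^ (q + 1) →
      ∑ i ∈ Finset.range (q ^ 2), ∑ j ∈ Finset.range q, c i j * x ^ i * y ^ j = 0) :
    ∀ i j, i < q ^ 2 → j < q → c i j = 0 := by
  classical
  have step1 : ∀ (a : F) (j : ℕ), j < q →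
      ∑ i ∈ Finset.range (q ^ 2), c i j * a ^ i = 0 := by
    intro a j hj
    set b : ℕ → F := fun j => ∑ i ∈ Finset.range (q ^ 2), c i j * a ^ i with hb
    set Pa : F[X] := ∑ j ∈ Finset.range q, C (b j) * X ^ j with hPa
    have heval : ∀ y ∈ Finset.univ.filter (fun y : F => y ^ q + y = a ^ (q + 1)),
        Pa.eval y = 0 := by
      intro y hy
      simp only [Finset.mem_filter, Finset.mem_univ, true_and] at hy
      have h0 := hvanish a y hy
      calc Pa.eval y = ∑ j ∈ Finset.range q, b j * y ^ j := by
            simp [hPa, eval_finset_sum]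
        _ = ∑ j ∈ Finset.range q, ∑ i ∈ Finset.range (q ^ 2), c i j * a ^ i * y ^ j := by
            simp only [hb, Finset.sum_mul]
        _ = 0 := by rw [Finset.sum_comm]; exact h0
    have hdeg : Pa.natDegree < q := by
      have : Pa.natDegree ≤ q - 1 := by
        refine natDegree_sum_le_of_forall_le _ _ fun j hj => ?_
        refine (natDegree_C_mul_le _ _).trans ?_
        simp only [natDegree_X_pow]
        exact Nat.le_pred_of_lt (Finset.mem_range.mp hj)
      omega
    have hP0 : Pa = 0 :=
      eq_zero_of_natDegree_lt_card_of_eval_eq_zero' Pa _ heval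
        (hdeg.trans_le (fiber_card q hq2 hfrob hcard a))
    have hcoeff := congrArg (fun P : F[X] => P.coeff j) hP0
    simp only [hPa, finset_sum_coeff, coeff_C_mul, coeff_X_pow, coeff_zero,
      mul_ite, mul_one, mul_zero] at hcoeff
    rw [Finset.sum_ite_eq (Finset.range q) j b, if_pos (Finset.mem_range.mpr hj)] at hcoeff
    exact hcoeff
  intro i j hi hj
  set Qj : F[X] := ∑ i ∈ Finset.range (q ^ 2), C (c i j) * X ^ i with hQj
  have heval : ∀ a : F, Qj.eval a = 0 := by
    intro a
    calc Qj.eval a = ∑ i ∈ Finset.range (q ^ 2), c i j * a ^ i := by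
          simp [hQj, eval_finset_sum]
      _ = 0 := step1 a j hj
  have hdeg : Qj.natDegree < Fintype.card F := by
    rw [hcard]
    have : Qj.natDegree ≤ q ^ 2 - 1 := by
      refine natDegree_sum_le_of_forall_le _ _ fun i hi => ?_
      refine (natDegree_C_mul_le _ _).trans ?_
      simp only [natDegree_X_pow]
      exact Nat.le_pred_of_lt (Finset.mem_range.mp hi)
    have : 0 < q ^ 2 := by positivity
    omega
  have hQ0 : Qj = 0 :=
    eq_zero_of_natDegree_lt_card_of_eval_eq_zero Qj Function.injective_id
      (fun a => heval a) hdeg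
  have hcoeff := congrArg (fun P : F[X] => P.coeff i) hQ0
  simp only [hQj, finset_sum_coeff, coeff_C_mul, coeff_X_pow, coeff_zero,
    mul_ite, mul_one, mul_zero] at hcoeff
  rw [Finset.sum_ite_eq (Finset.range (q ^ 2)) i (fun i => c i j),
    if_pos (Finset.mem_range.mpr hi)] at hcoeff
  exact hcoeff

/-- For `s < q^3`, the monomials `x^i y^j` with `0 ≤ i ≤ q^2 - 1`, `0 ≤ j ≤ q - 1`
and `q i + (q+1) j ≤ s` have linearly independent evaluation vectors at the `q^3`
affine rational points of the Hermitian curve `y^q + y = x^{q+1}`. -/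
theorem hermitian_monomials_linearIndependent
    (q : ℕ) (hq : ∃ p m : ℕ, p.Prime ∧ 0 < m ∧ q = p ^ m)
    (F : Type) [Field F] [Fintype F] (hcard : Fintype.card F = q ^ 2)
    (s : ℕ) (hs : s < q ^ 3) :
    LinearIndependent F
      (fun (m : {p : ℕ × ℕ | p.1 ≤ q ^ 2 - 1 ∧ p.2 ≤ q - 1 ∧ q * p.1 + (q + 1) * p.2 ≤ s}) =>
        (fun (P : {p : F × F | p.2 ^ q + p.2 = p.1 ^ (q + 1)}) =>
          P.1.1 ^ m.1.1 * P.1.2 ^ m.1.2)) := by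
  classical
  obtain ⟨p, n, hp, hn, hqe⟩ := hq
  have hq2 : 2 ≤ q := by
    have h1 : 1 < p ^ n := Nat.one_lt_pow (by omega) hp.one_lt
    omega
  haveI : CharP F (ringChar F) := ringChar.charP F
  obtain ⟨k, hrp, hFcard⟩ := FiniteField.card F (ringChar F)
  have hpr : p = ringChar F := by
    have h1 : (ringChar F) ^ (k : ℕ) = p ^ (n * 2) := by
      rw [← hFcard, hcard, hqe, ← pow_mul]
    have h2 : p ∣ (ringChar F) ^ (k : ℕ) := by
      rw [h1]; exact dvd_pow_self p (by omega)
    exact (Nat.prime_dvd_prime_iff_eq hp hrp).mp (hp.dvd_of_dvd_pow h2)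
  haveI : Fact p.Prime := ⟨hp⟩
  haveI hcharp : CharP F p := hpr ▸ ringChar.charP F
  have hfrob : ∀ x y : F, (x + y) ^ q = x ^ q + y ^ q := by
    intro x y
    rw [hqe]
    exact add_pow_char_pow ..
  have hq2pos : 0 < q ^ 2 := by positivity
  rw [linearIndependent_iff']
  intro t g hsum m hmt
  set c : ℕ → ℕ → F := fun i j => ∑ m' ∈ t, if m'.val = (i, j) then g m' else 0 with hc
  have hvanish : ∀ x y : F, y ^ q + y = x ^ (q + 1) →
      ∑ i ∈ Finset.range (q ^ 2), ∑ j ∈ Finset.range q, c i j * x ^ i * y ^ j = 0 := by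
    intro x y hxy
    have hP := congrFun hsum ⟨(x, y), hxy⟩
    simp only [Finset.sum_apply, Pi.smul_apply, smul_eq_mul, Pi.zero_apply] at hP
    calc ∑ i ∈ Finset.range (q ^ 2), ∑ j ∈ Finset.range q, c i j * x ^ i * y ^ j
        = ∑ i ∈ Finset.range (q ^ 2), ∑ j ∈ Finset.range q, ∑ m' ∈ t,
            (if m'.val = (i, j) then g m' else 0) * x ^ i * y ^ j := by
          simp only [hc, Finset.sum_mul]
      _ = ∑ m' ∈ t, ∑ i ∈ Finset.range (q ^ 2), ∑ j ∈ Finset.range q,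
            (if m'.val = (i, j) then g m' else 0) * x ^ i * y ^ j := by
          rw [Finset.sum_congr rfl fun i (_ : i ∈ Finset.range (q ^ 2)) =>
            (Finset.sum_comm (s := Finset.range q) (t := t))]
          exact Finset.sum_comm
      _ = ∑ m' ∈ t, g m' * (x ^ m'.val.1 * y ^ m'.val.2) := by
          refine Finset.sum_congr rfl fun m' _ => ?_
          have hi : m'.val.1 ∈ Finset.range (q ^ 2) :=
            Finset.mem_range.mpr (by have := m'.prop.1; omega)
          have hj : m'.val.2 ∈ Finset.range q :=
            Finset.mem_range.mpr (by have := m'.prop.2.1; omega)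
          rw [Finset.sum_eq_single_of_mem m'.val.1 hi, Finset.sum_eq_single_of_mem m'.val.2 hj]
          · rw [if_pos (by simp), mul_assoc]
          · intro j _ hne
            rw [if_neg (by simp [Prod.ext_iff]; omega), zero_mul, zero_mul]
          · intro i _ hne
            refine Finset.sum_eq_zero fun j _ => ?_
            rw [if_neg (by simp [Prod.ext_iff]; omega), zero_mul, zero_mul]
      _ = 0 := hP
  have hz := coeffs_zero q hq2 hfrob hcard c hvanish
  have hmz : (∑ m' ∈ t, if m'.val = (m.val.1, m.val.2) then g m' else 0) = 0 :=
    hz m.val.1 m.val.2 (by have := m.prop.1; omega) (by have := m.prop.2.1; omega)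
  simp only [Prod.mk.eta, Subtype.coe_inj] at hmz
  rw [Finset.sum_ite_eq' t m g, if_pos hmt] at hmz
  exact hmz
end

section
/- The number of pairs (i,j) of nonnegative integers with j ≤ q-1 and qi + (q+1)j ≤ s equals s - g + 1 for all integers s with 2g - 2 < s, where g = q(q-1)/2. -/
/-!
The pole numbers `q i + (q + 1) j` with `j < q` are exactly the elements of the Weierstrass
semigroup `⟨q, q + 1⟩`, each written once: `q i + (q + 1) j = q (i + j) + j`, so `v` is a pole
number iff `v % q ≤ v / q`. The gaps `q a + b` with `a < b < q` number `0 + 1 + ⋯ + (q - 1) = g`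
and all lie below `q (q - 1) = 2g`, so for `s ≥ 2g - 1` exactly `s + 1 - g` of `0, …, s` are
pole numbers.
-/

open Finset

namespace HermitianCurve

variable {q : ℕ}

lemma mul_add_div_of_lt (a : ℕ) {b : ℕ} (hb : b < q) : (q * a + b) / q = a := by
  rw [Nat.mul_add_div (by omega), Nat.div_eq_of_lt hb, add_zero]

lemma mul_add_mod_of_lt (a : ℕ) {b : ℕ} (hb : b < q) : (q * a + b) % q = b := by
  rw [mul_comm, Nat.mul_add_mod_of_lt hb]

lemma mul_add_succ_mul (q i j : ℕ) : q * i + (q + 1) * j = q * (i + j) + j := by ring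

lemma mul_sub_add_succ_mul_of_mod_le_div {v : ℕ} (h : v % q ≤ v / q) :
    q * (v / q - v % q) + (q + 1) * (v % q) = v := by
  rw [mul_add_succ_mul, Nat.sub_add_cancel h, Nat.div_add_mod]

lemma ncard_monomials_eq_card_filter_mod_le_div (hq : 0 < q) (s : ℕ) :
    {p : ℕ × ℕ | p.2 < q ∧ q * p.1 + (q + 1) * p.2 ≤ s}.ncard
      = #{v ∈ range (s + 1) | v % q ≤ v / q} := by
  rw [← Set.ncard_coe_finset]
  refine Set.ncard_congr (fun p _ => q * p.1 + (q + 1) * p.2) ?_ ?_ ?_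
  · rintro ⟨i, j⟩ ⟨hj, hs⟩
    dsimp only at hj hs ⊢
    rw [mul_add_succ_mul] at hs ⊢
    simp only [coe_filter, mem_range, Set.mem_ofPred_eq, mul_add_div_of_lt _ hj,
      mul_add_mod_of_lt _ hj]
    omega
  · rintro ⟨i, j⟩ ⟨i', j'⟩ ⟨hj, -⟩ ⟨hj', -⟩ h
    simp only [mul_add_succ_mul] at h
    have hmod := congrArg (· % q) h
    have hdiv := congrArg (· / q) h
    simp only [mul_add_div_of_lt _ hj, mul_add_div_of_lt _ hj', mul_add_mod_of_lt _ hj,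
      mul_add_mod_of_lt _ hj'] at hmod hdiv
    simp only [Prod.mk.injEq]
    omega
  · intro v hv
    simp only [coe_filter, mem_range, Set.mem_ofPred_eq] at hv
    have hv_eq := mul_sub_add_succ_mul_of_mod_le_div hv.2
    exact ⟨(v / q - v % q, v % q), ⟨Nat.mod_lt v hq, by dsimp only; omega⟩, hv_eq⟩

lemma lt_mul_pred_of_div_lt_mod (hq : 0 < q) {v : ℕ} (h : v / q < v % q) : v < q * (q - 1) :=
  calc v = q * (v / q) + v % q := (Nat.div_add_mod v q).symm
    _ < q * (v / q + 1) := by rw [mul_add_one]; exact Nat.add_lt_add_left (Nat.mod_lt v hq) _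
    _ ≤ q * (q - 1) := Nat.mul_le_mul_left q (by have := Nat.mod_lt v hq; omega)

lemma card_filter_div_lt_mod (hq : 0 < q) {N : ℕ} (hN : q * (q - 1) ≤ N) :
    #{v ∈ range N | v / q < v % q} = q * (q - 1) / 2 := by
  calc #{v ∈ range N | v / q < v % q} = #((range q).sigma range) := ?_
    _ = ∑ b ∈ range q, b := by simp only [card_sigma, card_range]
    _ = q * (q - 1) / 2 := sum_range_id q
  refine card_nbij' (fun v => ⟨v % q, v / q⟩) (fun x => q * x.2 + x.1) ?_ ?_ ?_ ?_
  · intro v hv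
    simp only [coe_filter, mem_range, Set.mem_ofPred_eq] at hv
    simp only [coe_sigma, Set.mem_sigma_iff, coe_range, Set.mem_Iio]
    exact ⟨Nat.mod_lt v hq, hv.2⟩
  · rintro ⟨b, a⟩ hx
    simp only [coe_sigma, Set.mem_sigma_iff, coe_range, Set.mem_Iio] at hx
    obtain ⟨hb, ha⟩ := hx
    have hgap : (q * a + b) / q < (q * a + b) % q := by
      rwa [mul_add_div_of_lt _ hb, mul_add_mod_of_lt _ hb]
    simp only [coe_filter, mem_range, Set.mem_ofPred_eq]
    exact ⟨(lt_mul_pred_of_div_lt_mod hq hgap).trans_le hN, hgap⟩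
  · intro v _
    exact Nat.div_add_mod v q
  · rintro ⟨b, a⟩ hx
    simp only [coe_sigma, Set.mem_sigma_iff, coe_range, Set.mem_Iio] at hx
    simp only [mul_add_div_of_lt _ hx.1, mul_add_mod_of_lt _ hx.1]

end HermitianCurve

/-- For `q ≥ 2`, `g = q(q-1)/2` and any `s > 2g - 2`, the number of pairs
`(i, j)` of nonnegative integers with `j ≤ q - 1` and `q i + (q+1) j ≤ s`
equals `s - g + 1`. -/
theorem hermitian_monomial_count (q g s : ℕ) (hq : 2 ≤ q) (hg : g = q * (q - 1) / 2)
    (hs : 2 * g - 2 < s) :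
    Set.ncard {p : ℕ × ℕ | p.2 ≤ q - 1 ∧ q * p.1 + (q + 1) * p.2 ≤ s}
      = s - g + 1 := by
  have hq0 : 0 < q := by omega
  have h2g : 2 * g = q * (q - 1) := hg ▸ Nat.two_mul_div_two_of_even (Nat.even_mul_pred_self q)
  have hset : {p : ℕ × ℕ | p.2 ≤ q - 1 ∧ q * p.1 + (q + 1) * p.2 ≤ s}
      = {p | p.2 < q ∧ q * p.1 + (q + 1) * p.2 ≤ s} := by
    ext p
    simp only [Set.mem_ofPred_eq]
    omega
  have hsplit := card_filter_add_card_filter_not (s := range (s + 1)) (fun v => v % q ≤ v / q)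
  simp only [not_le, card_range,
    HermitianCurve.card_filter_div_lt_mod hq0 (by omega : q * (q - 1) ≤ s + 1)] at hsplit
  rw [hset, HermitianCurve.ncard_monomials_eq_card_filter_mod_le_div hq0]
  omega
end
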